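/- arXiv:1910.04939 — 5 statements merged into one kernel-verified Lean document; each statement's English description precedes it below -/
import Mathlib

section
/- Let m ≥ 1 and κ ≥ 1. Let P^in be the uniform probability measure on the cube [0,1]^m ⊂ ℝ^m, and let P be any probability measure on ℝ^m whose support is contained in the set S = [1/(2κ), 1 − 1/(2κ)]^m. Then for every coupling γ of P^in and P (i.e., every probability measure on ℝ^m × ℝ^m whose first marginal is P^in and whose second marginal is P), ∫ ‖x − y‖² dγ(x,y) ≥ (1/(4κ))² · (1 − (1 − 1/(2κ))^m). -/
/-!
Put `c = 1/(4κ)`, so that `S = [2c, 1 - 2c]^m`. A point `x` of `[0,1]^m` outside the middle cube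
`T = [c, 1 - c]^m` has some coordinate within `c` of the boundary of `[0,1]`, hence lies at distance
at least `c` from every point of `S`. Markov's inequality then bounds the transport cost from below
by `c² · P^in(Tᶜ) = c² · (1 - (1 - 2c)^m)`.
-/

open MeasureTheory

noncomputable section

/-- The unit cube `[0,1]^m ⊂ ℝ^m`. -/
def unitCube (m : ℕ) : Set (EuclideanSpace ℝ (Fin m)) :=
  {x | ∀ i, x i ∈ Set.Icc (0 : ℝ) 1}

/-- The uniform probability measure on `[0,1]^m`: the restriction of Lebesgue measure to
the unit cube. -/
def cubeUniform (m : ℕ) : Measure (EuclideanSpace ℝ (Fin m)) :=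
  volume.restrict (unitCube m)

/-- The shrunken cube `S = [1/(2κ), 1 − 1/(2κ)]^m`. -/
def shrunkenCube (m κ : ℕ) : Set (EuclideanSpace ℝ (Fin m)) :=
  {x | ∀ i, x i ∈ Set.Icc (1 / (2 * (κ : ℝ))) (1 - 1 / (2 * (κ : ℝ)))}

open Set

def cube (ι : Type*) (a b : ℝ) : Set (EuclideanSpace ℝ ι) :=
  {x | ∀ i, x i ∈ Icc a b}

section Cube

variable {ι : Type*} {a b : ℝ}

lemma cube_eq_preimage_ofLp :
    cube ι a b = WithLp.ofLp ⁻¹' univ.pi fun _ => Icc a b := by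
  ext x
  exact ⟨fun h i _ => h i, fun h i => h i (mem_univ i)⟩

lemma measurableSet_cube [Countable ι] : MeasurableSet (cube ι a b) := by
  rw [cube_eq_preimage_ofLp]
  exact WithLp.measurable_ofLp 2 _ (MeasurableSet.univ_pi fun _ => measurableSet_Icc)

lemma isCompact_cube : IsCompact (cube ι a b) := by
  rw [cube_eq_preimage_ofLp]
  exact (PiLp.homeomorph 2 fun _ : ι => ℝ).isCompact_preimage.2
    (isCompact_univ_pi fun _ => isCompact_Icc)

lemma volume_cube [Fintype ι] : volume (cube ι a b) = ENNReal.ofReal (b - a) ^ Fintype.card ι := by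
  rw [cube_eq_preimage_ofLp, ← MeasurableEquiv.coe_toLp_symm,
    (EuclideanSpace.volume_preserving_symm_measurableEquiv_toLp ι).measure_preimage
      (MeasurableSet.univ_pi fun _ => measurableSet_Icc).nullMeasurableSet,
    volume_pi_pi]
  simp [Real.volume_Icc]

lemma cube_subset_cube {a' b' : ℝ} (ha : a ≤ a') (hb : b' ≤ b) : cube ι a' b' ⊆ cube ι a b :=
  fun _ hx i => Icc_subset_Icc ha hb (hx i)

lemma le_norm_sub_of_notMem_cube [Fintype ι] {r : ℝ} {x y : EuclideanSpace ℝ ι}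
    (hx : x ∉ cube ι a b) (hy : y ∈ cube ι (a + r) (b - r)) : r ≤ ‖x - y‖ := by
  obtain ⟨i, hi⟩ : ∃ i, x i ∉ Icc a b := by simpa [cube] using hx
  have hyi := hy i
  have hxyi : |x i - y i| ≤ ‖x - y‖ := PiLp.norm_apply_le (x - y) i
  rw [mem_Icc, not_and_or, not_le, not_le] at hi
  rw [mem_Icc] at hyi
  rcases hi with hi | hi
  · linarith [neg_abs_le (x i - y i)]
  · linarith [le_abs_self (x i - y i)]

end Cube

lemma unitCube_eq_cube (m : ℕ) : unitCube m = cube (Fin m) 0 1 := rfl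

instance (m : ℕ) : IsProbabilityMeasure (cubeUniform m) :=
  ⟨by simp [cubeUniform, unitCube_eq_cube, volume_cube]⟩

lemma cubeUniform_real_compl_cube {m : ℕ} {a b : ℝ} (ha : 0 ≤ a) (hab : a ≤ b) (hb : b ≤ 1) :
    (cubeUniform m).real (cube (Fin m) a b)ᶜ = 1 - (b - a) ^ m := by
  have hsub : cube (Fin m) a b ⊆ unitCube m := cube_subset_cube ha hb
  rw [probReal_compl_eq_one_sub measurableSet_cube, measureReal_def, cubeUniform,
    Measure.restrict_apply measurableSet_cube, inter_eq_self_of_subset_left hsub, volume_cube,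
    Fintype.card_fin, ENNReal.toReal_pow, ENNReal.toReal_ofReal (sub_nonneg.2 hab)]

lemma integrable_sq_norm_sub_of_ae_mem {E : Type*} [NormedAddCommGroup E] [MeasurableSpace E]
    [BorelSpace E] [SecondCountableTopology E] {γ : Measure (E × E)} [IsFiniteMeasure γ]
    {K L : Set E} (hK : Bornology.IsBounded K) (hL : Bornology.IsBounded L)
    (h : ∀ᵐ z ∂γ, z.1 ∈ K ∧ z.2 ∈ L) : Integrable (fun z => ‖z.1 - z.2‖ ^ 2) γ := by
  refine .of_bound ((continuous_fst.sub continuous_snd).norm.pow 2).aestronglyMeasurable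
    (Metric.diam (K ∪ L) ^ 2) ?_
  filter_upwards [h] with z ⟨hz₁, hz₂⟩
  rw [norm_pow, norm_norm, ← dist_eq_norm]
  exact pow_le_pow_left₀ dist_nonneg
    (Metric.dist_le_diam_of_mem (hK.union hL) (Or.inl hz₁) (Or.inr hz₂)) 2

lemma mul_measureReal_le_integral_sq_norm_sub {ι : Type*} [Fintype ι]
    {γ : Measure (EuclideanSpace ℝ ι × EuclideanSpace ℝ ι)} [IsFiniteMeasure γ] {a b r : ℝ}
    (hr : 0 ≤ r) (hint : Integrable (fun z => ‖z.1 - z.2‖ ^ 2) γ)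
    (h₂ : ∀ᵐ z ∂γ, z.2 ∈ cube ι (a + r) (b - r)) :
    r ^ 2 * γ.real {z | z.1 ∉ cube ι a b} ≤ ∫ z, ‖z.1 - z.2‖ ^ 2 ∂γ := by
  have hfar : {z | z.1 ∉ cube ι a b} ≤ᵐ[γ] {z | r ^ 2 ≤ ‖z.1 - z.2‖ ^ 2} := by
    filter_upwards [h₂] with z hz hz₁
    exact pow_le_pow_left₀ hr (le_norm_sub_of_notMem_cube hz₁ hz) 2
  calc r ^ 2 * γ.real {z | z.1 ∉ cube ι a b}
      ≤ r ^ 2 * γ.real {z | r ^ 2 ≤ ‖z.1 - z.2‖ ^ 2} :=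
        mul_le_mul_of_nonneg_left
          (ENNReal.toReal_mono (measure_ne_top _ _) (measure_mono_ae hfar)) (sq_nonneg r)
    _ ≤ ∫ z, ‖z.1 - z.2‖ ^ 2 ∂γ :=
        mul_meas_ge_le_integral_of_nonneg (.of_forall fun _ => by positivity) hint _

theorem statement7_general (m κ : ℕ) (hκ : 1 ≤ κ)
    (P : Measure (EuclideanSpace ℝ (Fin m)))
    (hP : P (shrunkenCube m κ)ᶜ = 0)
    (γ : Measure (EuclideanSpace ℝ (Fin m) × EuclideanSpace ℝ (Fin m)))
    [IsProbabilityMeasure γ]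
    (hγ₁ : γ.map Prod.fst = cubeUniform m) (hγ₂ : γ.map Prod.snd = P) :
    (1 / (4 * (κ : ℝ))) ^ 2 * (1 - (1 - 1 / (2 * (κ : ℝ))) ^ m)
      ≤ ∫ z, ‖z.1 - z.2‖ ^ 2 ∂γ := by
  set c : ℝ := 1 / (4 * (κ : ℝ))
  have hc : 0 ≤ c := by positivity
  have hc_le : c ≤ 1 / 4 := div_le_div_of_nonneg_left zero_le_one (by norm_num)
    (by linarith [(Nat.one_le_cast (α := ℝ)).2 hκ])
  have h2c : 1 / (2 * (κ : ℝ)) = c + c := by ring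
  have hS : shrunkenCube m κ = cube (Fin m) (c + c) (1 - c - c) := by
    rw [shrunkenCube, h2c, sub_sub]
    rfl
  have h₁ : ∀ᵐ z ∂γ, z.1 ∈ unitCube m :=
    ae_of_ae_map measurable_fst.aemeasurable (hγ₁ ▸ ae_restrict_mem measurableSet_cube)
  have h₂ : ∀ᵐ z ∂γ, z.2 ∈ cube (Fin m) (c + c) (1 - c - c) :=
    ae_of_ae_map measurable_snd.aemeasurable (hγ₂ ▸ hS ▸ mem_ae_iff.2 hP)
  have hint : Integrable (fun z => ‖z.1 - z.2‖ ^ 2) γ :=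
    integrable_sq_norm_sub_of_ae_mem isCompact_cube.isBounded isCompact_cube.isBounded
      (h₁.and h₂)
  have hmass : γ.real {z | z.1 ∉ cube (Fin m) c (1 - c)} = 1 - (1 - 1 / (2 * (κ : ℝ))) ^ m := by
    change γ.real (Prod.fst ⁻¹' (cube (Fin m) c (1 - c))ᶜ) = _
    rw [← map_measureReal_apply measurable_fst measurableSet_cube.compl, hγ₁,
      cubeUniform_real_compl_cube hc (by linarith) (by linarith),
      h2c, sub_sub]
  calc _ = c ^ 2 * γ.real {z | z.1 ∉ cube (Fin m) c (1 - c)} := by rw [hmass]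
    _ ≤ _ := mul_measureReal_le_integral_sq_norm_sub hc hint h₂

/-- if `P^in` is the uniform probability measure on `[0,1]^m` and `P` is a
probability measure supported in `S = [1/(2κ), 1 − 1/(2κ)]^m`, then every coupling `γ`
of `P^in` and `P` satisfies `∫ ‖x − y‖² dγ ≥ (1/(4κ))²·(1 − (1 − 1/(2κ))^m)`. -/
theorem statement7 (m κ : ℕ) (hm : 1 ≤ m) (hκ : 1 ≤ κ)
    (P : Measure (EuclideanSpace ℝ (Fin m))) [IsProbabilityMeasure P]
    (hP : P (shrunkenCube m κ)ᶜ = 0)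
    (γ : Measure (EuclideanSpace ℝ (Fin m) × EuclideanSpace ℝ (Fin m)))
    [IsProbabilityMeasure γ]
    (hγ₁ : γ.map Prod.fst = cubeUniform m) (hγ₂ : γ.map Prod.snd = P) :
    (1 / (4 * (κ : ℝ))) ^ 2 * (1 - (1 - 1 / (2 * (κ : ℝ))) ^ m)
      ≤ ∫ z, ‖z.1 - z.2‖ ^ 2 ∂γ :=
  statement7_general m κ hκ P hP γ hγ₁ hγ₂

end
end

section
/- For the categorical weighted k-means instance (I, v) with 1 ≤ k ≤ L, the optimal objective satisfies OPT_k(I, v) = ‖v‖₁ − max_{𝓕} Σ_{F∈𝓕} ‖v_F‖₂² / ‖v_F‖₁, where the maximum ranges over all partitions 𝓕 of [L] into k nonempty parts, and OPT_k(I,v) is the minimum over nonempty sets C ⊂ ℝ^L with |C| ≤ k of Σ_{i=1}^L v_i · min_{c∈C} ‖1_i − c‖². -/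
open Finset

noncomputable section

namespace St11

set_option linter.unnecessarySeqFocus false

variable {L k : ℕ}

def Phi (v : Fin L → ℝ) (h : Fin L → Fin k) : ℝ :=
  ∑ j : Fin k, (∑ i ∈ univ.filter (fun i => h i = j), (v i) ^ 2) /
    (∑ i ∈ univ.filter (fun i => h i = j), v i)

lemma sq_norm (x : EuclideanSpace ℝ (Fin L)) : ‖x‖ ^ 2 = ∑ m, (x m) ^ 2 := by
  rw [EuclideanSpace.norm_eq, Real.sq_sqrt (by positivity)]
  simp [sq_abs]

lemma coord (i : Fin L) (y : EuclideanSpace ℝ (Fin L)) (m : Fin L) :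
    (EuclideanSpace.single i (1:ℝ) - y) m = (if m = i then (1:ℝ) else 0) - y m := by
  simp [EuclideanSpace.single_apply]

lemma cluster_expand (v : Fin L → ℝ) (F : Finset (Fin L)) (c : Fin L → ℝ) :
    ∑ i ∈ F, v i * (∑ m, ((if m = i then (1:ℝ) else 0) - c m) ^ 2)
      = ∑ m, ((∑ i ∈ F, v i) * (c m) ^ 2
          - 2 * (if m ∈ F then v m else 0) * c m + (if m ∈ F then v m else 0)) := by
  simp_rw [Finset.mul_sum]
  rw [Finset.sum_comm]
  refine Finset.sum_congr rfl fun m _ => ?_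
  have key : ∀ i ∈ F, v i * ((if m = i then (1:ℝ) else 0) - c m) ^ 2
      = v i * (c m) ^ 2 + (if m = i then v i else 0) * (1 - 2 * c m) := by
    intro i _
    by_cases h : m = i <;> simp [h] <;> ring
  rw [Finset.sum_congr rfl key, Finset.sum_add_distrib, ← Finset.sum_mul, ← Finset.sum_mul]
  have : (∑ i ∈ F, if m = i then v i else 0) = (if m ∈ F then v m else 0) := by
    simp [Finset.sum_ite_eq]
  rw [this]
  ring

lemma cluster_lb (v : Fin L → ℝ) (hv : ∀ i, 0 < v i) (F : Finset (Fin L)) (c : Fin L → ℝ) :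
    (∑ i ∈ F, v i) - (∑ i ∈ F, (v i) ^ 2) / (∑ i ∈ F, v i)
      ≤ ∑ i ∈ F, v i * (∑ m, ((if m = i then (1:ℝ) else 0) - c m) ^ 2) := by
  rcases F.eq_empty_or_nonempty with rfl | hF
  · simp
  have hW : 0 < ∑ i ∈ F, v i := Finset.sum_pos (fun i _ => hv i) hF
  rw [cluster_expand]
  have h1 : (∑ i ∈ F, v i) - (∑ i ∈ F, (v i) ^ 2) / (∑ i ∈ F, v i)
      = ∑ m, ((if m ∈ F then v m else 0)
          - (if m ∈ F then v m else 0) ^ 2 / (∑ i ∈ F, v i)) := by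
    rw [Finset.sum_sub_distrib]
    congr 1
    · rw [Finset.sum_ite_mem, Finset.univ_inter]
    · rw [← Finset.sum_div]
      congr 1
      rw [show (∑ i : Fin L, (if i ∈ F then v i else 0) ^ 2)
            = ∑ i : Fin L, (if i ∈ F then (v i) ^ 2 else 0) from
          Finset.sum_congr rfl fun i _ => by split_ifs <;> simp,
        Finset.sum_ite_mem, Finset.univ_inter]
  rw [h1]
  refine Finset.sum_le_sum fun m _ => ?_
  set W := ∑ i ∈ F, v i
  set b := (if m ∈ F then v m else 0) with hb
  have hb0 : 0 ≤ b := by by_cases h : m ∈ F <;> simp [hb, h, (hv m).le]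
  have key : 0 ≤ (W * c m - b) ^ 2 := sq_nonneg _
  have h2 : b ^ 2 = (b ^ 2 / W) * W := (div_mul_cancel₀ _ hW.ne').symm
  nlinarith [sq_nonneg (W * c m - b), hW, h2]

lemma cluster_eq (v : Fin L → ℝ) (hv : ∀ i, 0 < v i) (F : Finset (Fin L)) (hF : F.Nonempty) :
    ∑ i ∈ F, v i * (∑ m, ((if m = i then (1:ℝ) else 0)
        - (if m ∈ F then v m / (∑ i ∈ F, v i) else 0)) ^ 2)
      = (∑ i ∈ F, v i) - (∑ i ∈ F, (v i) ^ 2) / (∑ i ∈ F, v i) := by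
  have hW : 0 < ∑ i ∈ F, v i := Finset.sum_pos (fun i _ => hv i) hF
  rw [cluster_expand]
  have h2 : ∀ m ∈ (univ : Finset (Fin L)),
      ((∑ i ∈ F, v i) * ((if m ∈ F then v m / (∑ i ∈ F, v i) else 0)) ^ 2
        - 2 * (if m ∈ F then v m else 0) * (if m ∈ F then v m / (∑ i ∈ F, v i) else 0)
        + (if m ∈ F then v m else 0))
      = (if m ∈ F then v m else 0) - (if m ∈ F then (v m)^2 / (∑ i ∈ F, v i) else 0) := by
    intro m _
    by_cases h : m ∈ F <;> simp [h]
    field_simp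
    ring
  rw [Finset.sum_congr rfl h2, Finset.sum_sub_distrib]
  congr 1
  · rw [Finset.sum_ite_mem, Finset.univ_inter]
  · rw [Finset.sum_ite_mem, Finset.univ_inter, Finset.sum_div]

lemma total_lb (v : Fin L → ℝ) (hv : ∀ i, 0 < v i)
    (clb : ∀ (F : Finset (Fin L)) (c : Fin L → ℝ),
      (∑ i ∈ F, v i) - (∑ i ∈ F, (v i) ^ 2) / (∑ i ∈ F, v i)
        ≤ ∑ i ∈ F, v i * (∑ m, ((if m = i then (1:ℝ) else 0) - c m) ^ 2))
    (h : Fin L → Fin k) (κ : Fin k → (Fin L → ℝ)) :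
    (∑ i, v i) - Phi v h
      ≤ ∑ i, v i * (∑ m, ((if m = i then (1:ℝ) else 0) - κ (h i) m) ^ 2) := by
  have e1 : (∑ i, v i) = ∑ j : Fin k, ∑ i ∈ univ.filter (fun i => h i = j), v i :=
    (Finset.sum_fiberwise _ _ _).symm
  have e2 : (∑ i, v i * (∑ m, ((if m = i then (1:ℝ) else 0) - κ (h i) m) ^ 2))
      = ∑ j : Fin k, ∑ i ∈ univ.filter (fun i => h i = j),
          v i * (∑ m, ((if m = i then (1:ℝ) else 0) - κ j m) ^ 2) := by
    rw [← Finset.sum_fiberwise univ (fun i => h i)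
      (fun i => v i * (∑ m, ((if m = i then (1:ℝ) else 0) - κ (h i) m) ^ 2))]
    refine Finset.sum_congr rfl fun j _ => Finset.sum_congr rfl fun i hi => ?_
    rw [Finset.mem_filter] at hi
    rw [hi.2]
  rw [e1, e2, Phi, ← Finset.sum_sub_distrib]
  exact Finset.sum_le_sum fun j _ => clb _ _

lemma phi_update (v : Fin L → ℝ) (hv : ∀ i, 0 < v i) (h : Fin L → Fin k)
    (i₁ i₂ : Fin L) (j₀ : Fin k) (hne : i₁ ≠ i₂) (heq : h i₁ = h i₂)
    (hj₀ : ∀ i, h i ≠ j₀) :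
    Phi v h ≤ Phi v (Function.update h i₁ j₀) := by
  classical
  set h' := Function.update h i₁ j₀ with hh'
  set j₁ := h i₁ with hj₁
  have hj01 : j₁ ≠ j₀ := hj₀ i₁
  set f : Fin k → ℝ := fun j => (∑ i ∈ univ.filter (fun i => h i = j), (v i) ^ 2) /
    (∑ i ∈ univ.filter (fun i => h i = j), v i) with hf
  set f' : Fin k → ℝ := fun j => (∑ i ∈ univ.filter (fun i => h' i = j), (v i) ^ 2) /
    (∑ i ∈ univ.filter (fun i => h' i = j), v i) with hf'
  have hmem0 : j₀ ∈ (univ : Finset (Fin k)) := mem_univ _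
  have hmem1 : j₁ ∈ univ.erase j₀ := by simp [hj01]
  have split : ∀ g : Fin k → ℝ, ∑ j, g j = g j₀ + (g j₁ + ∑ j ∈ (univ.erase j₀).erase j₁, g j) := by
    intro g
    rw [Finset.add_sum_erase _ g hmem1, Finset.add_sum_erase _ g hmem0]
  have tail : ∀ j ∈ (univ.erase j₀).erase j₁, f' j = f j := by
    intro j hj
    rw [Finset.mem_erase, Finset.mem_erase] at hj
    have : univ.filter (fun i => h' i = j) = univ.filter (fun i => h i = j) := by
      refine Finset.filter_congr fun i _ => ?_
      rcases eq_or_ne i i₁ with rfl | hi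
      · simp [hh', Function.update_self, hj.1.symm, ← hj₁, (Ne.symm hj.2.1)]
      · simp [hh', Function.update_of_ne hi]
    simp only [hf', hf, this]
  have fib0 : univ.filter (fun i => h i = j₀) = ∅ := by
    refine Finset.filter_false_of_mem fun i _ => hj₀ i
  have fib0' : univ.filter (fun i => h' i = j₀) = {i₁} := by
    ext i
    rcases eq_or_ne i i₁ with rfl | hi
    · simp [hh', Function.update_self]
    · simp [hh', Function.update_of_ne hi, hj₀ i, hi]
  have fib1' : univ.filter (fun i => h' i = j₁) = (univ.filter (fun i => h i = j₁)).erase i₁ := by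
    ext i
    rcases eq_or_ne i i₁ with rfl | hi
    · simp [hh', Function.update_self, hj01.symm]
    · simp [hh', Function.update_of_ne hi, hi]
  have hf0 : f j₀ = 0 := by simp [hf, fib0]
  have hf0' : f' j₀ = v i₁ := by
    simp [hf', fib0', sq, mul_div_assoc, div_self (hv i₁).ne']
  -- the main inequality for the j₁ cluster
  set G := univ.filter (fun i => h i = j₁) with hG
  have hi1G : i₁ ∈ G := by simp [hG, hj₁]
  have hi2G' : i₂ ∈ G.erase i₁ := by simp [hG, ← heq, Ne.symm hne]
  set S' := ∑ i ∈ G.erase i₁, (v i) ^ 2 with hS'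
  set W' := ∑ i ∈ G.erase i₁, v i with hW'
  have hW'pos : 0 < W' := Finset.sum_pos (fun i _ => hv i) ⟨i₂, hi2G'⟩
  have hS'nn : 0 ≤ S' := Finset.sum_nonneg fun i _ => sq_nonneg _
  have hSsum : S' + (v i₁) ^ 2 = ∑ i ∈ G, (v i) ^ 2 := Finset.sum_erase_add _ _ hi1G
  have hWsum : W' + v i₁ = ∑ i ∈ G, v i := Finset.sum_erase_add _ _ hi1G
  have hf1 : f j₁ = (S' + (v i₁) ^ 2) / (W' + v i₁) := by
    simp only [hf, ← hG, hSsum, hWsum]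
  have hf1' : f' j₁ = S' / W' := by simp only [hf', fib1', ← hG, hS', hW']
  have key : (S' + (v i₁) ^ 2) / (W' + v i₁) ≤ S' / W' + v i₁ := by
    rw [div_le_iff₀ (add_pos hW'pos (hv i₁))]
    have hc : S' / W' * W' = S' := div_mul_cancel₀ _ hW'pos.ne'
    nlinarith [div_nonneg hS'nn hW'pos.le, hv i₁, hW'pos]
  calc Phi v h = f j₀ + (f j₁ + ∑ j ∈ (univ.erase j₀).erase j₁, f j) := split f
    _ ≤ f' j₀ + (f' j₁ + ∑ j ∈ (univ.erase j₀).erase j₁, f' j) := by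
        rw [hf0, hf0', hf1, hf1', Finset.sum_congr rfl tail]
        have := key
        linarith
    _ = Phi v h' := (split f').symm

lemma surj_improve (hkL : k ≤ L) (v : Fin L → ℝ) (hv : ∀ i, 0 < v i) :
    ∀ n (h : Fin L → Fin k), k ≤ (univ.image h).card + n →
      ∃ π : Fin L → Fin k, Function.Surjective π ∧ Phi v h ≤ Phi v π := by
  intro n
  induction n with
  | zero =>
    intro h hcard
    refine ⟨h, fun j => ?_, le_refl _⟩
    have : (univ.image h) = univ := Finset.eq_univ_of_card _
      (le_antisymm (Finset.card_le_univ _) (by simpa using hcard))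
    have : j ∈ univ.image h := this ▸ mem_univ j
    simpa using this
  | succ n ih =>
    intro h hcard
    by_cases hs : Function.Surjective h
    · exact ⟨h, hs, le_refl _⟩
    unfold Function.Surjective at hs
    push_neg at hs
    obtain ⟨j₀, hj₀⟩ := hs
    have hninj : ¬ Function.Injective h := by
      intro hinj
      have hLk : L ≤ k := by simpa using Fintype.card_le_of_injective h hinj
      have : Function.Bijective h := (Fintype.bijective_iff_injective_and_card h).2
        ⟨hinj, by simp [le_antisymm hLk hkL]⟩
      exact hj₀ (this.2 j₀).choose (this.2 j₀).choose_spec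
    rw [Function.not_injective_iff] at hninj
    obtain ⟨i₁, i₂, heq, hne⟩ := hninj
    have hj₀' : ∀ i, h i ≠ j₀ := fun i hi => hj₀ i hi
    set h' := Function.update h i₁ j₀ with hh'
    have hsub : insert j₀ (univ.image h) ⊆ univ.image h' := by
      intro j hj
      rcases Finset.mem_insert.1 hj with rfl | hj
      · exact Finset.mem_image.2 ⟨i₁, mem_univ _, by simp [hh']⟩
      · obtain ⟨i, _, rfl⟩ := Finset.mem_image.1 hj
        rcases eq_or_ne i i₁ with rfl | hi
        · exact Finset.mem_image.2 ⟨i₂, mem_univ _,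
            by simp [hh', Function.update_of_ne (Ne.symm hne), heq]⟩
        · exact Finset.mem_image.2 ⟨i, mem_univ _, by simp [hh', Function.update_of_ne hi]⟩
    have hcard' : (univ.image h).card + 1 ≤ (univ.image h').card := by
      have : j₀ ∉ univ.image h := by
        simp only [Finset.mem_image, not_exists]
        intro i hi
        exact hj₀' i hi.2
      calc (univ.image h).card + 1 = (insert j₀ (univ.image h)).card :=
            (Finset.card_insert_of_notMem this).symm
        _ ≤ (univ.image h').card := Finset.card_le_card hsub
    obtain ⟨π, hπs, hπ⟩ := ih h' (by omega)
    exact ⟨π, hπs, le_trans (phi_update v hv h i₁ i₂ j₀ hne heq hj₀') hπ⟩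

end St11

section Main

open St11

theorem statement11' (L k : ℕ) (hL : 2 ≤ L) (hk : 1 ≤ k) (hkL : k ≤ L)
    (v : Fin L → ℝ) (hv : ∀ i, 0 < v i)
    (cluster_lb : ∀ (F : Finset (Fin L)) (c : Fin L → ℝ),
      (∑ i ∈ F, v i) - (∑ i ∈ F, (v i) ^ 2) / (∑ i ∈ F, v i)
        ≤ ∑ i ∈ F, v i * (∑ m, ((if m = i then (1:ℝ) else 0) - c m) ^ 2))
    (cluster_eq : ∀ (F : Finset (Fin L)), F.Nonempty →
      ∑ i ∈ F, v i * (∑ m, ((if m = i then (1:ℝ) else 0)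
        - (if m ∈ F then v m / (∑ i ∈ F, v i) else 0)) ^ 2)
      = (∑ i ∈ F, v i) - (∑ i ∈ F, (v i) ^ 2) / (∑ i ∈ F, v i))
    (total_lb : ∀ (h : Fin L → Fin k) (κ : Fin k → (Fin L → ℝ)),
      (∑ i, v i) - Phi v h
        ≤ ∑ i, v i * (∑ m, ((if m = i then (1:ℝ) else 0) - κ (h i) m) ^ 2))
    (surj_improve : ∀ (h : Fin L → Fin k),
      ∃ π : Fin L → Fin k, Function.Surjective π ∧ Phi v h ≤ Phi v π) :
    sInf {c : ℝ | ∃ C : Finset (EuclideanSpace ℝ (Fin L)), C.Nonempty ∧ C.card ≤ k ∧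
        (∑ i, v i * (sInf ((fun x => ‖EuclideanSpace.single i (1 : ℝ) - x‖) ''
          (C : Set (EuclideanSpace ℝ (Fin L))))) ^ 2) = c}
      = (∑ i, v i) -
        sSup {t : ℝ | ∃ π : Fin L → Fin k, Function.Surjective π ∧
          (∑ j : Fin k, (∑ i ∈ univ.filter (fun i => π i = j), (v i) ^ 2) /
            (∑ i ∈ univ.filter (fun i => π i = j), v i)) = t} := by
  classical
  set A : Set ℝ := {t : ℝ | ∃ π : Fin L → Fin k, Function.Surjective π ∧
          (∑ j : Fin k, (∑ i ∈ univ.filter (fun i => π i = j), (v i) ^ 2) /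
            (∑ i ∈ univ.filter (fun i => π i = j), v i)) = t} with hA
  have hA' : A = (fun π : Fin L → Fin k => Phi v π) '' {π | Function.Surjective π} := by
    ext t
    constructor
    · rintro ⟨π, hπ, rfl⟩; exact ⟨π, hπ, rfl⟩
    · rintro ⟨π, hπ, rfl⟩; exact ⟨π, hπ, rfl⟩
  have hAfin : A.Finite := by
    rw [hA']; exact Set.Finite.image _ (Set.toFinite _)
  -- a surjection exists
  have hπ0 : ∃ π : Fin L → Fin k, Function.Surjective π := by
    refine ⟨fun i => ⟨min i.val (k-1), by omega⟩, fun j => ?_⟩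
    refine ⟨⟨j.val, lt_of_lt_of_le j.2 hkL⟩, ?_⟩
    have := j.2
    exact Fin.ext (by simp; omega)
  have hAne : A.Nonempty := ⟨Phi v hπ0.choose, hπ0.choose, hπ0.choose_spec, rfl⟩
  have hAbdd : BddAbove A := hAfin.bddAbove
  have hsup_mem : sSup A ∈ A := hAne.csSup_mem hAfin
  set target : ℝ := (∑ i, v i) - sSup A with htarget
  have hphi_le : ∀ h : Fin L → Fin k, Phi v h ≤ sSup A := by
    intro h
    obtain ⟨π, hπs, hπ⟩ := surj_improve h
    exact hπ.trans (le_csSup hAbdd ⟨π, hπs, rfl⟩)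
  set costSet : Set ℝ := {c : ℝ | ∃ C : Finset (EuclideanSpace ℝ (Fin L)), C.Nonempty ∧ C.card ≤ k ∧
        (∑ i, v i * (sInf ((fun x => ‖EuclideanSpace.single i (1 : ℝ) - x‖) ''
          (C : Set (EuclideanSpace ℝ (Fin L))))) ^ 2) = c} with hcostSet
  -- lower bound
  have hlb : ∀ c ∈ costSet, target ≤ c := by
    rintro c ⟨C, hCne, hCcard, rfl⟩
    have hx : ∀ i : Fin L, ∃ y, ∃ (hy : y ∈ C),
        ‖EuclideanSpace.single i (1:ℝ) - y‖
          = sInf ((fun x => ‖EuclideanSpace.single i (1 : ℝ) - x‖) ''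
            (C : Set (EuclideanSpace ℝ (Fin L)))) := by
      intro i
      have hne : ((fun x => ‖EuclideanSpace.single i (1 : ℝ) - x‖) ''
          (C : Set (EuclideanSpace ℝ (Fin L)))).Nonempty :=
        (Finset.coe_nonempty.2 hCne).image _
      have hfin : ((fun x => ‖EuclideanSpace.single i (1 : ℝ) - x‖) ''
          (C : Set (EuclideanSpace ℝ (Fin L)))).Finite := (C.finite_toSet).image _
      obtain ⟨y, hy, hval⟩ := hne.csInf_mem hfin
      exact ⟨y, hy, hval⟩
    choose x hxC hxval using hx
    have hcard : Fintype.card {y // y ∈ C} ≤ Fintype.card (Fin k) := by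
      simpa [Fintype.card_coe] using hCcard
    obtain ⟨ι⟩ := Function.Embedding.nonempty_of_card_le hcard
    set h : Fin L → Fin k := fun i => ι ⟨x i, hxC i⟩ with hh
    set κ : Fin k → (Fin L → ℝ) := fun j =>
      if hj : ∃ y : {y // y ∈ C}, ι y = j then ((hj.choose : EuclideanSpace ℝ (Fin L)) : Fin L → ℝ)
      else 0 with hκ
    have hκh : ∀ i, κ (h i) = (x i : Fin L → ℝ) := by
      intro i
      have hj : ∃ y : {y // y ∈ C}, ι y = h i := ⟨⟨x i, hxC i⟩, rfl⟩
      have : hj.choose = ⟨x i, hxC i⟩ := ι.injective hj.choose_spec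
      simp only [hκ, dif_pos hj, this]
    have hrw : (∑ i, v i * (sInf ((fun x => ‖EuclideanSpace.single i (1 : ℝ) - x‖) ''
          (C : Set (EuclideanSpace ℝ (Fin L))))) ^ 2)
        = ∑ i, v i * (∑ m, ((if m = i then (1:ℝ) else 0) - κ (h i) m) ^ 2) := by
      refine Finset.sum_congr rfl fun i _ => ?_
      rw [← hxval i, sq_norm]
      congr 1
      refine Finset.sum_congr rfl fun m _ => ?_
      rw [coord, hκh]
    rw [hrw]
    calc target ≤ (∑ i, v i) - Phi v h := by
          rw [htarget]; have := hphi_le h; linarith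
      _ ≤ _ := total_lb h κ
  -- achievability
  obtain ⟨πs, hπs, hπval⟩ := hsup_mem
  set κs : Fin k → EuclideanSpace ℝ (Fin L) := fun j =>
    WithLp.toLp 2 (fun m => if m ∈ univ.filter (fun i => πs i = j) then
        v m / (∑ i ∈ univ.filter (fun i => πs i = j), v i) else 0 : Fin L → ℝ) with hκs
  set C₀ : Finset (EuclideanSpace ℝ (Fin L)) := Finset.image κs univ with hC₀
  have hkne : (univ : Finset (Fin k)).Nonempty := ⟨⟨0, hk⟩, mem_univ _⟩
  have hC₀ne : C₀.Nonempty := hkne.image _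
  have hC₀card : C₀.card ≤ k := le_trans (Finset.card_image_le) (by simp)
  have hfib_ne : ∀ j : Fin k, (univ.filter (fun i => πs i = j)).Nonempty := by
    intro j
    obtain ⟨i, hi⟩ := hπs j
    exact ⟨i, Finset.mem_filter.2 ⟨mem_univ _, hi⟩⟩
  set c₀ : ℝ := ∑ i, v i * (sInf ((fun x => ‖EuclideanSpace.single i (1 : ℝ) - x‖) ''
          (C₀ : Set (EuclideanSpace ℝ (Fin L))))) ^ 2 with hc₀
  have hc₀mem : c₀ ∈ costSet := ⟨C₀, hC₀ne, hC₀card, rfl⟩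
  have hc₀le : c₀ ≤ target := by
    have step1 : ∀ i : Fin L,
        sInf ((fun x => ‖EuclideanSpace.single i (1 : ℝ) - x‖) ''
          (C₀ : Set (EuclideanSpace ℝ (Fin L))))
        ≤ ‖EuclideanSpace.single i (1:ℝ) - κs (πs i)‖ := by
      intro i
      refine csInf_le ⟨0, fun r hr => ?_⟩ ⟨κs (πs i), by simp [hC₀], rfl⟩
      obtain ⟨y, _, rfl⟩ := hr
      exact norm_nonneg _
    have step0 : ∀ i : Fin L,
        0 ≤ sInf ((fun x => ‖EuclideanSpace.single i (1 : ℝ) - x‖) ''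
          (C₀ : Set (EuclideanSpace ℝ (Fin L)))) := by
      intro i
      refine Real.sInf_nonneg fun r hr => ?_
      obtain ⟨y, _, rfl⟩ := hr
      exact norm_nonneg _
    have hsum : c₀ ≤ ∑ i, v i * ‖EuclideanSpace.single i (1:ℝ) - κs (πs i)‖ ^ 2 := by
      rw [hc₀]
      refine Finset.sum_le_sum fun i _ => ?_
      exact mul_le_mul_of_nonneg_left
        (pow_le_pow_left₀ (step0 i) (step1 i) 2) (hv i).le
    refine hsum.trans ?_
    have hexp : ∑ i, v i * ‖EuclideanSpace.single i (1:ℝ) - κs (πs i)‖ ^ 2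
        = ∑ i, v i * (∑ m, ((if m = i then (1:ℝ) else 0) - κs (πs i) m) ^ 2) := by
      refine Finset.sum_congr rfl fun i _ => ?_
      rw [sq_norm]
      congr 1
      exact Finset.sum_congr rfl fun m _ => by rw [coord]
    rw [hexp]
    have hfw : ∑ i, v i * (∑ m, ((if m = i then (1:ℝ) else 0) - κs (πs i) m) ^ 2)
        = ∑ j : Fin k, ∑ i ∈ univ.filter (fun i => πs i = j),
            v i * (∑ m, ((if m = i then (1:ℝ) else 0) - κs j m) ^ 2) := by
      rw [← Finset.sum_fiberwise univ (fun i => πs i)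
        (fun i => v i * (∑ m, ((if m = i then (1:ℝ) else 0) - κs (πs i) m) ^ 2))]
      refine Finset.sum_congr rfl fun j _ => Finset.sum_congr rfl fun i hi => ?_
      rw [Finset.mem_filter] at hi
      rw [hi.2]
    rw [hfw]
    have hclust : ∀ j : Fin k,
        ∑ i ∈ univ.filter (fun i => πs i = j),
            v i * (∑ m, ((if m = i then (1:ℝ) else 0) - κs j m) ^ 2)
        = (∑ i ∈ univ.filter (fun i => πs i = j), v i)
          - (∑ i ∈ univ.filter (fun i => πs i = j), (v i) ^ 2)
            / (∑ i ∈ univ.filter (fun i => πs i = j), v i) := by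
      intro j
      exact cluster_eq _ (hfib_ne j)
    rw [Finset.sum_congr rfl fun j _ => hclust j, Finset.sum_sub_distrib,
      Finset.sum_fiberwise univ (fun i => πs i) v, htarget, ← hπval]
  -- conclusion
  have : sInf costSet = target := by
    refine le_antisymm (csInf_le_of_le ⟨target, hlb⟩ hc₀mem hc₀le) (le_csInf ⟨c₀, hc₀mem⟩ hlb)
  exact this


/-- for the categorical weighted k-means instance `(I, v)` (the standard
basis vectors `1₁,…,1_L` of `ℝ^L` with positive weights `v`), and `1 ≤ k ≤ L`,
`OPT_k(I, v) = ‖v‖₁ − max_𝓕 ∑_{F∈𝓕} ‖v_F‖₂²/‖v_F‖₁`, the maximum ranging over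
partitions `𝓕` of `[L]` into `k` nonempty parts (encoded by surjections `π : [L] → [k]`). -/
theorem statement11 (L k : ℕ) (hL : 2 ≤ L) (hk : 1 ≤ k) (hkL : k ≤ L)
    (v : Fin L → ℝ) (hv : ∀ i, 0 < v i) :
    sInf {c : ℝ | ∃ C : Finset (EuclideanSpace ℝ (Fin L)), C.Nonempty ∧ C.card ≤ k ∧
        (∑ i, v i * (sInf ((fun x => ‖EuclideanSpace.single i (1 : ℝ) - x‖) ''
          (C : Set (EuclideanSpace ℝ (Fin L))))) ^ 2) = c}
      = (∑ i, v i) -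
        sSup {t : ℝ | ∃ π : Fin L → Fin k, Function.Surjective π ∧
          (∑ j : Fin k, (∑ i ∈ univ.filter (fun i => π i = j), (v i) ^ 2) /
            (∑ i ∈ univ.filter (fun i => π i = j), v i)) = t} :=
  statement11' L k hL hk hkL v hv (St11.cluster_lb v hv)
    (fun F hF => St11.cluster_eq v hv F hF)
    (St11.total_lb v hv (St11.cluster_lb v hv))
    (fun h => St11.surj_improve hkL v hv k h (by omega))

end Main
end
end

section
/- Suppose x, a₁, a₂, b₁, b₂ are real numbers with x, a₁, a₂, b₁, b₂ > 0, b₁² ≥ a₁, b₂² ≥ a₂, and x ≥ max{a₁/b₁, a₂/b₂}. Then x + (a₁ + a₂)/(b₁ + b₂) ≥ max{ (x² + a₁)/(x + b₁) + a₂/b₂ , (x² + a₂)/(x + b₂) + a₁/b₁ }. -/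
/-!
Write `g(y) = (y b₁ - a₁) / (y + b₁)`, so that `x - (x² + a₁)/(x + b₁) = g(x)`, and the mediant
identity `(a₁ + a₂)/(b₁ + b₂) - a₂/b₂ = (a₁ b₂ - a₂ b₁)/(b₂ (b₁ + b₂))`. The difference of the two
sides is then `g(x) + (a₁ b₂ - a₂ b₁)/(b₂ (b₁ + b₂))`. If `a₁ b₂ ≥ a₂ b₁` both terms are nonnegative.
Otherwise use that `g` is increasing and `x ≥ a₂/b₂`: `g(a₂/b₂) = (a₂ b₁ - a₁ b₂)/(a₂ + b₁ b₂)`,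
which dominates the negative term because `a₂ ≤ b₂²`. The second entry of the maximum is the first
one with the indices swapped.
-/

lemma self_sub_sq_add_div_add {x a b : ℝ} (hxb : x + b ≠ 0) :
    x - (x ^ 2 + a) / (x + b) = (x * b - a) / (x + b) := by
  field_simp
  ring

lemma mediant_sub_div {a₁ a₂ b₁ b₂ : ℝ} (hb₂ : b₂ ≠ 0) (hb : b₁ + b₂ ≠ 0) :
    (a₁ + a₂) / (b₁ + b₂) - a₂ / b₂ = (a₁ * b₂ - a₂ * b₁) / (b₂ * (b₁ + b₂)) := by
  field_simp
  ring

lemma mul_sub_div_add_le_of_le {a b x y : ℝ} (hab : 0 ≤ a + b ^ 2) (hyb : 0 < y + b)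
    (hyx : y ≤ x) : (y * b - a) / (y + b) ≤ (x * b - a) / (x + b) := by
  rw [div_le_div_iff₀ hyb (by linarith)]
  nlinarith [mul_nonneg (sub_nonneg.mpr hyx) hab]

lemma sq_add_div_add_add_div_le_add_mediant {x a₁ a₂ b₁ b₂ : ℝ} (ha₁ : 0 ≤ a₁) (ha₂ : 0 ≤ a₂)
    (hb₁ : 0 < b₁) (hb₂ : 0 < b₂) (h₂ : a₂ ≤ b₂ ^ 2) (hx₁ : a₁ ≤ x * b₁) (hx₂ : a₂ ≤ x * b₂) :
    (x ^ 2 + a₁) / (x + b₁) + a₂ / b₂ ≤ x + (a₁ + a₂) / (b₁ + b₂) := by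
  have hx : 0 ≤ x := by nlinarith
  have hxb : 0 < x + b₁ := by linarith
  have hdiff : x + (a₁ + a₂) / (b₁ + b₂) - ((x ^ 2 + a₁) / (x + b₁) + a₂ / b₂)
      = (x * b₁ - a₁) / (x + b₁) + (a₁ * b₂ - a₂ * b₁) / (b₂ * (b₁ + b₂)) := by
    rw [← self_sub_sq_add_div_add hxb.ne', ← mediant_sub_div hb₂.ne' (by positivity)]
    ring
  rw [← sub_nonneg, hdiff]
  rcases le_or_gt (a₂ * b₁) (a₁ * b₂) with hc | hc
  · exact add_nonneg (div_nonneg (by linarith) hxb.le) (div_nonneg (by linarith) (by positivity))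
  · have hr : 0 < a₂ / b₂ + b₁ := by positivity
    have hmono : (a₂ / b₂ * b₁ - a₁) / (a₂ / b₂ + b₁) ≤ (x * b₁ - a₁) / (x + b₁) :=
      mul_sub_div_add_le_of_le (by positivity) hr ((div_le_iff₀ hb₂).mpr hx₂)
    have hg : (a₂ / b₂ * b₁ - a₁) / (a₂ / b₂ + b₁) = (a₂ * b₁ - a₁ * b₂) / (a₂ + b₁ * b₂) := by
      field_simp
    have hcmp : (a₂ * b₁ - a₁ * b₂) / (b₂ * (b₁ + b₂)) ≤ (a₂ * b₁ - a₁ * b₂) / (a₂ + b₁ * b₂) :=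
      div_le_div_of_nonneg_left (by linarith) (by positivity) (by nlinarith)
    rw [← neg_sub (a₂ * b₁), neg_div]
    linarith

theorem statement13_general (x a₁ a₂ b₁ b₂ : ℝ) (ha₁ : 0 < a₁) (ha₂ : 0 < a₂)
    (hb₁ : 0 < b₁) (hb₂ : 0 < b₂) (h₁ : a₁ ≤ b₁ ^ 2) (h₂ : a₂ ≤ b₂ ^ 2)
    (hxm : max (a₁ / b₁) (a₂ / b₂) ≤ x) :
    max ((x ^ 2 + a₁) / (x + b₁) + a₂ / b₂) ((x ^ 2 + a₂) / (x + b₂) + a₁ / b₁)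
      ≤ x + (a₁ + a₂) / (b₁ + b₂) := by
  obtain ⟨hx₁, hx₂⟩ := max_le_iff.mp hxm
  rw [div_le_iff₀ hb₁] at hx₁
  rw [div_le_iff₀ hb₂] at hx₂
  refine max_le ?_ ?_
  · exact sq_add_div_add_add_div_le_add_mediant ha₁.le ha₂.le hb₁ hb₂ h₂ hx₁ hx₂
  · rw [add_comm a₁, add_comm b₁]
    exact sq_add_div_add_add_div_le_add_mediant ha₂.le ha₁.le hb₂ hb₁ h₁ hx₂ hx₁

/-- For positive reals `x, a₁, a₂, b₁, b₂` with `b₁² ≥ a₁`, `b₂² ≥ a₂` and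
`x ≥ max {a₁/b₁, a₂/b₂}`, one has
`x + (a₁+a₂)/(b₁+b₂) ≥ max { (x²+a₁)/(x+b₁) + a₂/b₂ , (x²+a₂)/(x+b₂) + a₁/b₁ }`. -/
theorem statement13 (x a₁ a₂ b₁ b₂ : ℝ) (hx : 0 < x) (ha₁ : 0 < a₁) (ha₂ : 0 < a₂)
    (hb₁ : 0 < b₁) (hb₂ : 0 < b₂) (h₁ : a₁ ≤ b₁ ^ 2) (h₂ : a₂ ≤ b₂ ^ 2)
    (hxm : max (a₁ / b₁) (a₂ / b₂) ≤ x) :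
    max ((x ^ 2 + a₁) / (x + b₁) + a₂ / b₂) ((x ^ 2 + a₂) / (x + b₂) + a₁ / b₁)
      ≤ x + (a₁ + a₂) / (b₁ + b₂) :=
  statement13_general x a₁ a₂ b₁ b₂ ha₁ ha₂ hb₁ hb₂ h₁ h₂ hxm
end

section
/- Suppose v₁ ≥ v₂ ≥ ⋯ ≥ v_L > 0 and 2 ≤ k ≤ L. Then for every partition 𝓕 of [L] into k nonempty parts, v₁ + ⋯ + v_{k−1} + (Σ_{i=k}^L v_i²)/(Σ_{i=k}^L v_i) ≥ Σ_{F∈𝓕} ‖v_F‖₂² / ‖v_F‖₁; that is, the partition placing each of the k−1 largest weights in its own singleton part and the remaining indices in a single part maximizes Σ_{F∈𝓕} ‖v_F‖₂²/‖v_F‖₁ over all k-partitions of [L]. -/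
/-!
Write `f(F) = ‖v_F‖₂² / ‖v_F‖₁`. If `a` carries the largest weight, lies in the part `G`, and `X`
is any other part, then isolating `a` and merging the rest of `G` into `X` does not decrease the
sum: `f(G) + f(X) ≤ v_a + f((G \ {a}) ∪ X)`. The new partition has one part fewer and lives on
`[L] \ {a}`, so induction on the number of parts peels off the `k − 1` largest weights one by one.
-/

open Finset Function

/-- The merge inequality, with `q, r` the sums of `v²` and `v` over `G \ {a}` and `p, x` those
over `X`. -/
lemma sq_add_div_add_add_div_le {a r q x p : ℝ} (ha : 0 < a) (hr : 0 ≤ r) (hx : 0 < x)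
    (hq₀ : 0 ≤ q) (hq : q ≤ a * r) (hpa : p ≤ a * x) (hpx : p ≤ x ^ 2) :
    (a ^ 2 + q) / (a + r) + p / x ≤ a + (q + p) / (r + x) := by
  have hnum : 0 ≤ r * (a * x - p) * (a + r) + (a * r - q) * (x - a) * x := by
    rcases le_total a x with hax | hxa
    · have := mul_nonneg (mul_nonneg hr (sub_nonneg.2 hpa)) (add_nonneg ha.le hr)
      have := mul_nonneg (mul_nonneg (sub_nonneg.2 hq) (sub_nonneg.2 hax)) hx.le
      linarith
    · nlinarith [mul_nonneg (mul_nonneg hr (add_nonneg ha.le hr)) (sub_nonneg.2 hpx),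
        mul_nonneg (mul_nonneg (mul_nonneg hr hr) hx.le) (sub_nonneg.2 hxa),
        mul_nonneg (mul_nonneg hq₀ (sub_nonneg.2 hxa)) hx.le]
  have key : a + (q + p) / (r + x) - ((a ^ 2 + q) / (a + r) + p / x)
      = (r * (a * x - p) * (a + r) + (a * r - q) * (x - a) * x) / (x * (r + x) * (a + r)) := by
    field_simp
    ring
  have := div_nonneg hnum (by positivity : (0 : ℝ) ≤ x * (r + x) * (a + r))
  linarith

lemma sum_sq_le_mul_sum {ι : Type*} {v : ι → ℝ} {F : Finset ι} {c : ℝ}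
    (hv : ∀ i ∈ F, 0 ≤ v i) (hc : ∀ i ∈ F, v i ≤ c) : ∑ i ∈ F, v i ^ 2 ≤ c * ∑ i ∈ F, v i := by
  rw [mul_sum]
  exact sum_le_sum fun i hi => by rw [sq]; exact mul_le_mul_of_nonneg_right (hc i hi) (hv i hi)

lemma Function.Surjective.injective_fiber {α β : Type*} [Fintype α] [DecidableEq β]
    {π : α → β} (hπ : Surjective π) : Injective fun j => univ.filter (π · = j) := by
  intro j j' h
  obtain ⟨i, rfl⟩ := hπ j
  simpa using (Finset.ext_iff.1 h i).1 (by simp)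

lemma Finpartition.exists_parts_eq_image_fiber {α β : Type*} [Fintype α] [DecidableEq α]
    [Fintype β] [DecidableEq β] {π : α → β} (hπ : Surjective π) :
    ∃ P : Finpartition (univ : Finset α), P.parts = univ.image fun j => univ.filter (π · = j) := by
  refine ⟨Finpartition.ofSetSetoid (Setoid.ker π) univ, ?_⟩
  rw [Finpartition.ofSetSetoid_parts, ← image_univ_of_surjective hπ, image_image]
  congr! 2 with a i
  simp [Setoid.ker_def, eq_comm]

variable {ι : Type*} [DecidableEq ι]

lemma Finpartition.exists_parts_eq_insert_erase_union {s G X : Finset ι} {a : ι}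
    (P : Finpartition s) (hG : G ∈ P.parts) (ha : a ∈ G) (hX : X ∈ P.parts) (hXG : X ≠ G) :
    ∃ Q : Finpartition (s.erase a),
      Q.parts = insert (G.erase a ∪ X) ((P.parts.erase G).erase X) := by
  set rest := (P.parts.erase G).erase X
  have hrest : rest ⊆ P.parts := (erase_subset _ _).trans (erase_subset _ _)
  have hparts : P.parts = insert G (insert X rest) := by
    rw [insert_erase (mem_erase.2 ⟨hXG, hX⟩), insert_erase hG]
  have hdisj : ∀ F ∈ rest, Disjoint G F ∧ Disjoint X F := fun F hF =>
    ⟨P.disjoint hG (hrest hF) (ne_of_mem_erase (mem_of_mem_erase hF)).symm,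
      P.disjoint hX (hrest hF) (ne_of_mem_erase hF).symm⟩
  refine ⟨⟨_, ?_, ?_, ?_⟩, rfl⟩
  · rw [supIndep_iff_pairwiseDisjoint, coe_insert]
    refine (P.disjoint.subset hrest).insert fun F hF _ => ?_
    exact disjoint_union_left.2 ⟨(hdisj F hF).1.mono_left (erase_subset _ _), (hdisj F hF).2⟩
  · have haX : a ∉ X := disjoint_left.1 (P.disjoint hG hX hXG.symm) ha
    have haU : a ∉ rest.sup id := by
      simpa only [mem_sup, id, not_exists, not_and] using
        fun F hF => disjoint_left.1 (hdisj F hF).1 ha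
    rw [← P.sup_parts, hparts, sup_insert, sup_insert, sup_insert]
    simp only [id, sup_eq_union]
    rw [erase_union_distrib, erase_union_distrib, erase_eq_of_notMem haX,
      erase_eq_of_notMem haU, union_assoc]
  · simp only [bot_eq_empty, mem_insert, not_or]
    exact ⟨fun h => (P.nonempty_of_mem_parts hX).ne_empty (subset_empty.1 (h ▸ subset_union_right)),
      fun h => P.empty_notMem_parts (hrest h)⟩

/-- The paper's `‖v_F‖₂² / ‖v_F‖₁`. -/
noncomputable def selfWeightedMean (v : ι → ℝ) (F : Finset ι) : ℝ :=
  (∑ i ∈ F, v i ^ 2) / ∑ i ∈ F, v i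

lemma selfWeightedMean_add_le {v : ι → ℝ} (hv : ∀ i, 0 < v i) {G X : Finset ι} {a : ι}
    (ha : a ∈ G) (hX : X.Nonempty) (hGX : Disjoint G X) (hmax : ∀ i ∈ G ∪ X, v i ≤ v a) :
    selfWeightedMean v G + selfWeightedMean v X ≤ v a + selfWeightedMean v (G.erase a ∪ X) := by
  have hRX : Disjoint (G.erase a) X := hGX.mono_left (erase_subset _ _)
  have hv₀ : ∀ {F : Finset ι}, ∀ i ∈ F, 0 ≤ v i := fun i _ => (hv i).le
  rw [selfWeightedMean, selfWeightedMean, selfWeightedMean, ← add_sum_erase _ _ ha,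
    ← add_sum_erase _ _ ha, sum_union hRX, sum_union hRX]
  refine sq_add_div_add_add_div_le (hv a) (sum_nonneg hv₀) (sum_pos (fun i _ => hv i) hX)
    (sum_nonneg fun i _ => sq_nonneg (v i)) (sum_sq_le_mul_sum hv₀ fun i hi => ?_)
    (sum_sq_le_mul_sum hv₀ fun i hi => hmax i (mem_union_right _ hi))
    (sum_sq_le_sq_sum_of_nonneg hv₀)
  exact hmax i (mem_union_left _ (mem_of_mem_erase hi))

theorem sum_selfWeightedMean_le {v : ι → ℝ} (hv : ∀ i, 0 < v i) {s T : Finset ι}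
    (P : Finpartition s) (hTs : T ⊆ s) (hdom : ∀ t ∈ T, ∀ i ∈ s \ T, v i ≤ v t)
    (hcard : #P.parts = #T + 1) :
    ∑ F ∈ P.parts, selfWeightedMean v F ≤ ∑ t ∈ T, v t + selfWeightedMean v (s \ T) := by
  induction hT : #T generalizing s T with
  | zero =>
    obtain rfl : T = ∅ := card_eq_zero.1 hT
    obtain ⟨F, hF⟩ := card_eq_one.1 (hcard.trans (by rw [hT]))
    have hFs : F = s := by simpa [hF] using P.sup_parts
    simp [hF, hFs]
  | succ n ih =>
    obtain ⟨a, haT, hTa⟩ := T.exists_max_image v (card_pos.1 (by omega))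
    have has : ∀ i ∈ s, v i ≤ v a := fun i hi => by
      by_cases hiT : i ∈ T
      · exact hTa i hiT
      · exact hdom a haT i (mem_sdiff.2 ⟨hi, hiT⟩)
    obtain ⟨G, hG, haG⟩ := P.exists_mem (hTs haT)
    obtain ⟨X, hX, hXG⟩ := exists_mem_ne (by omega : 1 < #P.parts) G
    obtain ⟨Q, hQ⟩ := P.exists_parts_eq_insert_erase_union hG haG hX hXG
    have hsdiff : s.erase a \ T.erase a = s \ T := by
      rw [← erase_sdiff_distrib, erase_eq_of_notMem fun h => (mem_sdiff.1 h).2 haT]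
    have hmerged : G.erase a ∪ X ∉ (P.parts.erase G).erase X := fun h =>
      (P.nonempty_of_mem_parts hX).ne_empty <| (disjoint_self_iff_empty X).1 <|
        (P.disjoint (mem_of_mem_erase (mem_of_mem_erase h)) hX (ne_of_mem_erase h)).mono_left
          subset_union_right
    have hmerge := selfWeightedMean_add_le hv haG (P.nonempty_of_mem_parts hX)
      (P.disjoint hG hX hXG.symm) fun i hi => has i (union_subset (P.subset hG) (P.subset hX) hi)
    have hQle := ih (T := T.erase a) Q (erase_subset_erase a hTs)
      (by rw [hsdiff]; exact fun t ht => hdom t (mem_of_mem_erase ht))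
      (by rw [hQ, card_insert_of_notMem hmerged, card_erase_of_mem (mem_erase.2 ⟨hXG, hX⟩),
        card_erase_of_mem hG, card_erase_of_mem haT]; omega) (card_erase_of_mem haT ▸ by omega)
    calc ∑ F ∈ P.parts, selfWeightedMean v F
        = selfWeightedMean v G + selfWeightedMean v X
          + ∑ F ∈ (P.parts.erase G).erase X, selfWeightedMean v F := by
          rw [← add_sum_erase _ _ hG, ← add_sum_erase _ _ (mem_erase.2 ⟨hXG, hX⟩), add_assoc]
      _ ≤ v a + ∑ F ∈ Q.parts, selfWeightedMean v F := by
          rw [hQ, sum_insert hmerged]; linarith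
      _ ≤ ∑ t ∈ T, v t + selfWeightedMean v (s \ T) := by
          rw [← add_sum_erase _ _ haT, ← hsdiff]; linarith

/-- for positive weights `v₁ ≥ v₂ ≥ ⋯ ≥ v_L > 0` and `2 ≤ k ≤ L`, every
partition `𝓕` of `[L]` into `k` nonempty parts (encoded by a surjection `π : [L] → [k]`)
satisfies `∑_{F∈𝓕} ‖v_F‖₂²/‖v_F‖₁ ≤ v₁ + ⋯ + v_{k−1} + (∑_{i≥k} v_i²)/(∑_{i≥k} v_i)`;
i.e. the partition isolating each of the `k−1` largest weights maximizes the sum. -/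
theorem statement15 (L k : ℕ) (hk : 2 ≤ k) (hkL : k ≤ L) (v : Fin L → ℝ)
    (hpos : ∀ i, 0 < v i) (hmono : ∀ i j : Fin L, i ≤ j → v j ≤ v i)
    (π : Fin L → Fin k) (hπ : Function.Surjective π) :
    (∑ j : Fin k, (∑ i ∈ univ.filter (fun i => π i = j), (v i) ^ 2) /
        (∑ i ∈ univ.filter (fun i => π i = j), v i))
      ≤ (∑ i ∈ univ.filter (fun i : Fin L => (i : ℕ) < k - 1), v i) +
        (∑ i ∈ univ.filter (fun i : Fin L => k - 1 ≤ (i : ℕ)), (v i) ^ 2) /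
        (∑ i ∈ univ.filter (fun i : Fin L => k - 1 ≤ (i : ℕ)), v i) := by
  set T := univ.filter fun i : Fin L => (i : ℕ) < k - 1
  have hcompl : univ \ T = univ.filter fun i : Fin L => k - 1 ≤ (i : ℕ) := by
    ext i
    simp [T]
  obtain ⟨P, hP⟩ := Finpartition.exists_parts_eq_image_fiber hπ
  have hle := sum_selfWeightedMean_le hpos P (subset_univ T)
    (fun t ht i hi => hmono t i (by simp [T] at ht hi; omega))
    (by rw [hP, card_image_of_injective _ hπ.injective_fiber, card_univ, Fintype.card_fin,
      Fin.card_filter_val_lt]; omega)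
  rw [hP, sum_image fun _ _ _ _ h => hπ.injective_fiber h, hcompl] at hle
  exact hle
end

section
/- Consider the categorical weighted k-means instance (I, v) with v₁ ≥ v₂ ≥ ⋯ ≥ v_L > 0 and 2 ≤ k ≤ L. Let C* = {1₁, …, 1_{k−1}, μ} ⊂ ℝ^L, where μ is the weighted centroid of the remaining indicator vectors, i.e. μ_i = v_i / (Σ_{j=k}^L v_j) for i ≥ k and μ_i = 0 for i ≤ k−1. Then C* is an optimal solution: Σ_{i=1}^L v_i · min_{c∈C*} ‖1_i − c‖² = OPT_k(I, v), where OPT_k(I,v) is the minimum over nonempty sets C ⊂ ℝ^L with |C| ≤ k of Σ_{i=1}^L v_i · min_{c∈C} ‖1_i − c‖². -/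
/-!
For a cluster `S` of indicator vectors, the parallel axis theorem shows that the best centre is
the weighted centroid, at cost `V_S - A_S / V_S` with `V_S = ∑_{i∈S} v_i`, `A_S = ∑_{i∈S} v_i²`.
A centroid set `C` with `|C| ≤ k` splits the indices into at most `k` nearest-centre clusters.
Removing the heaviest index from its cluster and merging the rest of that cluster into another one
does not increase the total cost, since its weight dominates every other weight involved.
Doing this for the `k - 1` heaviest indices leaves a single cluster containing the light indices,
so by monotonicity of the cluster cost the total is at least the cost of the light cluster.
That is the cost of `C*`, since each light indicator lies within squared distance `2` of the light
centroid and so has it as a nearest centre.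
-/

open Finset

noncomputable section

/-- The categorical weighted k-means cost of a finite centroid set `C ⊆ ℝ^L` on the
instance `(I, v)` of one-hot indicator vectors with weights `v`:
`∑_i v_i · min_{c∈C} ‖1_i − c‖²`. -/
def catCost (L : ℕ) (v : Fin L → ℝ) (C : Finset (EuclideanSpace ℝ (Fin L))) : ℝ :=
  ∑ i, v i * (sInf ((fun x => ‖EuclideanSpace.single i (1 : ℝ) - x‖) ''
    (C : Set (EuclideanSpace ℝ (Fin L))))) ^ 2

/-- The weighted centroid of the "light" indicator vectors `1_k, …, 1_L` (0-indexed: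
indices `i` with `k − 1 ≤ i`): coordinate `v_i / ∑_{j≥k} v_j` at such `i`, `0` elsewhere. -/
def lightCentroid (L k : ℕ) (v : Fin L → ℝ) : EuclideanSpace ℝ (Fin L) :=
  ∑ i ∈ univ.filter (fun i : Fin L => k - 1 ≤ (i : ℕ)),
    (v i / ∑ i' ∈ univ.filter (fun i' : Fin L => k - 1 ≤ (i' : ℕ)), v i') •
      EuclideanSpace.single i (1 : ℝ)

open Classical in
/-- The centroid set `C* = {1₁, …, 1_{k−1}, μ}`: the `k − 1` heaviest indicator vectors
together with the weighted centroid `μ` of the remaining ones. -/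
noncomputable def Cstar (L k : ℕ) (v : Fin L → ℝ) : Finset (EuclideanSpace ℝ (Fin L)) :=
  ((univ.filter (fun i : Fin L => (i : ℕ) < k - 1)).image
    (fun i => EuclideanSpace.single i (1 : ℝ))) ∪ {lightCentroid L k v}

def clusterCost {ι : Type*} (v : ι → ℝ) (S : Finset ι) : ℝ :=
  ∑ i ∈ S, v i - (∑ i ∈ S, v i ^ 2) / ∑ i ∈ S, v i

section ClusterCost

variable {ι : Type*} {v : ι → ℝ}

theorem clusterCost_nonneg {S : Finset ι} (hv : ∀ i ∈ S, 0 ≤ v i) : 0 ≤ clusterCost v S := by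
  rw [clusterCost, sub_nonneg]
  exact div_le_of_le_mul₀ (sum_nonneg hv) (sum_nonneg hv)
    (by rw [← sq]; exact sum_sq_le_sq_sum_of_nonneg hv)

theorem clusterCost_mono [DecidableEq ι] {s t : Finset ι} (hts : t ⊆ s) (hv : ∀ i ∈ s, 0 ≤ v i) :
    clusterCost v t ≤ clusterCost v s := by
  set Vt := ∑ i ∈ t, v i
  set At := ∑ i ∈ t, v i ^ 2
  have hVt : 0 ≤ Vt := sum_nonneg fun i hi => hv i (hts hi)
  rcases hVt.eq_or_lt with hVt | hVt
  · simpa [clusterCost, Vt, ← hVt] using clusterCost_nonneg hv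
  have hsplit (g : ι → ℝ) : ∑ i ∈ s, g i = ∑ i ∈ t, g i + ∑ i ∈ s \ t, g i := by
    rw [add_comm, sum_sdiff hts]
  have hB : 0 ≤ ∑ i ∈ s \ t, v i := sum_nonneg fun i hi => hv i (sdiff_subset hi)
  have hAB : ∑ i ∈ s \ t, v i ^ 2 ≤ (∑ i ∈ s \ t, v i) ^ 2 :=
    sum_sq_le_sq_sum_of_nonneg fun i hi => hv i (sdiff_subset hi)
  have hAt : 0 ≤ At / Vt := div_nonneg (sum_nonneg fun i _ => sq_nonneg _) hVt.le
  have hAtVt : At / Vt * Vt = At := div_mul_cancel₀ _ hVt.ne'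
  simp only [clusterCost, hsplit v, hsplit (v · ^ 2)]
  have : (At + ∑ i ∈ s \ t, v i ^ 2) / (Vt + ∑ i ∈ s \ t, v i) ≤ ∑ i ∈ s \ t, v i + At / Vt := by
    rw [div_le_iff₀ (by positivity)]
    nlinarith [mul_nonneg hB hVt.le, mul_nonneg hAt hB]
  linarith

/- This is `clusterCost_erase_union_le` below, read with `a = v a` and with `V₁, A₁` (resp.
`V₂, A₂`) the sums of `v` and `v²` over `S.erase a` (resp. `T`). -/
theorem exchange_inequality {a V₁ V₂ A₁ A₂ : ℝ} (ha : 0 < a) (hV₁ : 0 ≤ V₁) (hV₂ : 0 < V₂)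
    (hA₁ : 0 ≤ A₁) (hA₁a : A₁ ≤ a * V₁) (hA₂a : A₂ ≤ a * V₂) (hA₂V₂ : A₂ ≤ V₂ ^ 2) :
    (V₁ + V₂) - (A₁ + A₂) / (V₁ + V₂) ≤ (a + V₁) - (a ^ 2 + A₁) / (a + V₁) + (V₂ - A₂ / V₂) := by
  rw [← sub_nonneg]
  have key : 0 ≤ a * V₁ * (V₂ ^ 2 - A₂) + V₁ ^ 2 * (a * V₂ - A₂) + A₁ * V₂ * (a - V₂) := by
    rcases le_total V₂ a with h | h
    · have := mul_nonneg (mul_nonneg hA₁ hV₂.le) (sub_nonneg.2 h)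
      nlinarith [mul_nonneg (mul_nonneg ha.le hV₁) (sub_nonneg.2 hA₂V₂),
        mul_nonneg (sq_nonneg V₁) (sub_nonneg.2 hA₂a)]
    · -- here the last term is negative, and is absorbed by the first one using `A₂ ≤ a V₂`
      nlinarith [mul_nonneg (mul_nonneg hV₂.le (sub_nonneg.2 h)) (sub_nonneg.2 hA₁a),
        mul_nonneg (mul_nonneg ha.le hV₁) (sub_nonneg.2 hA₂a),
        mul_nonneg (sq_nonneg V₁) (sub_nonneg.2 hA₂a)]
  have e : (a + V₁) - (a ^ 2 + A₁) / (a + V₁) + (V₂ - A₂ / V₂) - ((V₁ + V₂) - (A₁ + A₂) / (V₁ + V₂))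
      = (a * V₁ * (V₂ ^ 2 - A₂) + V₁ ^ 2 * (a * V₂ - A₂) + A₁ * V₂ * (a - V₂)) /
        ((a + V₁) * V₂ * (V₁ + V₂)) := by
    field_simp
    ring
  rw [e]
  exact div_nonneg key (by positivity)

theorem clusterCost_erase_union_le [DecidableEq ι] {S T : Finset ι} (hST : Disjoint S T)
    {a : ι} (ha : a ∈ S) (hv : ∀ i ∈ S ∪ T, 0 < v i) (hmax : ∀ i ∈ S ∪ T, v i ≤ v a) :
    clusterCost v (S.erase a ∪ T) ≤ clusterCost v S + clusterCost v T := by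
  rcases T.eq_empty_or_nonempty with rfl | hT
  · simpa [clusterCost] using clusterCost_mono (erase_subset a S) fun i hi => (hv i (by simpa)).le
  have hvS : ∀ i ∈ S, 0 < v i := fun i hi => hv i (mem_union_left T hi)
  have hvT : ∀ i ∈ T, 0 < v i := fun i hi => hv i (mem_union_right S hi)
  have hsq_le {U : Finset ι} (hU : U ⊆ S ∪ T) : ∑ i ∈ U, v i ^ 2 ≤ v a * ∑ i ∈ U, v i := by
    rw [mul_sum]
    exact sum_le_sum fun i hi => by
      rw [sq]; exact mul_le_mul_of_nonneg_right (hmax i (hU hi)) (hv i (hU hi)).le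
  have h := exchange_inequality (hvS a ha) (sum_nonneg fun i hi => (hvS i (mem_of_mem_erase hi)).le)
    (sum_pos hvT hT) (sum_nonneg fun i _ => sq_nonneg (v i))
    (hsq_le ((erase_subset a S).trans subset_union_left)) (hsq_le subset_union_right)
    (sum_sq_le_sq_sum_of_nonneg fun i hi => (hvT i hi).le)
  simp only [clusterCost, sum_union (hST.mono_left (erase_subset a S)), ← add_sum_erase S _ ha]
  exact h

theorem sum_clusterCost_fiber_redirect_le [DecidableEq ι] {β : Type*} [DecidableEq β]
    {s : Finset ι} {J : Finset β} {σ : ι → β} {a : ι} (ha : a ∈ s) (hσa : σ a ∈ J)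
    (hv : ∀ i ∈ s, 0 < v i) (hmax : ∀ i ∈ s, v i ≤ v a) {j₁ : β} (hj₁ : j₁ ∈ J.erase (σ a)) :
    ∑ j ∈ J.erase (σ a),
        clusterCost v ((s.erase a).filter fun i => (if σ i = σ a then j₁ else σ i) = j)
      ≤ ∑ j ∈ J, clusterCost v (s.filter (σ · = j)) := by
  have hj₁ne : j₁ ≠ σ a := ne_of_mem_erase hj₁
  have hfiber (j) (hj : j ∈ (J.erase (σ a)).erase j₁) :
      ((s.erase a).filter fun i => (if σ i = σ a then j₁ else σ i) = j) = s.filter (σ · = j) := by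
    have := ne_of_mem_erase (mem_of_mem_erase hj)
    have := ne_of_mem_erase hj
    ext i; simp only [mem_filter, mem_erase]; split_ifs <;> grind
  have hmerged : ((s.erase a).filter fun i => (if σ i = σ a then j₁ else σ i) = j₁)
      = (s.filter (σ · = σ a)).erase a ∪ s.filter (σ · = j₁) := by
    ext i; simp only [mem_filter, mem_erase, mem_union]; split_ifs <;> grind
  have hdisj : Disjoint (s.filter (σ · = σ a)) (s.filter (σ · = j₁)) :=
    disjoint_filter.2 fun i _ h => h ▸ hj₁ne.symm
  have hsub : s.filter (σ · = σ a) ∪ s.filter (σ · = j₁) ⊆ s :=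
    union_subset (filter_subset _ s) (filter_subset _ s)
  have hexchange := clusterCost_erase_union_le hdisj (mem_filter.2 ⟨ha, rfl⟩)
    (fun i hi => hv i (hsub hi)) (fun i hi => hmax i (hsub hi))
  rw [← add_sum_erase _ _ hj₁, hmerged, sum_congr rfl fun j hj => congrArg _ (hfiber j hj),
    ← add_sum_erase _ _ hσa, ← add_sum_erase _ _ hj₁]
  linarith

theorem clusterCost_le_sum_clusterCost_fiber [DecidableEq ι] {β : Type*} [DecidableEq β]
    {s t : Finset ι} (hts : t ⊆ s) (hv : ∀ i ∈ s, 0 < v i)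
    (hheavy : ∀ i ∈ s \ t, ∀ j ∈ t, v j ≤ v i) {J : Finset β} (hJ : #J ≤ #(s \ t) + 1)
    {σ : ι → β} (hσ : ∀ i ∈ s, σ i ∈ J) :
    clusterCost v t ≤ ∑ j ∈ J, clusterCost v (s.filter (σ · = j)) := by
  induction s using Finset.strongInduction generalizing J σ with
  | H s ih =>
  rcases le_or_gt #J 1 with hJ1 | hJ1
  · refine (clusterCost_mono hts fun i hi => (hv i hi).le).trans ?_
    rcases J.eq_empty_or_nonempty with rfl | ⟨j, hj⟩
    · rw [eq_empty_of_forall_notMem fun i hi => notMem_empty _ (hσ i hi)]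
      simp [clusterCost]
    · obtain rfl : J = {j} :=
        eq_singleton_iff_unique_mem.2 ⟨hj, fun j' hj' => card_le_one.1 hJ1 j' hj' j hj⟩
      rw [sum_singleton, filter_true_of_mem fun i hi => mem_singleton.1 (hσ i hi)]
  obtain ⟨a, haD, hamax⟩ := exists_max_image (s \ t) v (card_pos.1 (by omega))
  obtain ⟨has, hat⟩ := mem_sdiff.1 haD
  have hmax : ∀ i ∈ s, v i ≤ v a := fun i hi =>
    if hit : i ∈ t then hheavy a haD i hit else hamax i (mem_sdiff.2 ⟨hi, hit⟩)
  obtain ⟨j₁, hj₁⟩ : (J.erase (σ a)).Nonempty := by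
    rw [← card_pos, card_erase_of_mem (hσ a has)]; omega
  refine le_trans ?_ (sum_clusterCost_fiber_redirect_le has (hσ a has) hv hmax hj₁)
  have hsdiff : s.erase a \ t = (s \ t).erase a := erase_sdiff_comm s t a
  refine ih _ (erase_ssubset has) (fun i hi => mem_erase.2 ⟨ne_of_mem_of_not_mem hi hat, hts hi⟩)
    (fun i hi => hv i (mem_of_mem_erase hi)) (fun i hi => hheavy i ?_) ?_ ?_
  · exact mem_of_mem_erase (hsdiff ▸ hi)
  · rw [card_erase_of_mem (hσ a has), hsdiff, card_erase_of_mem haD]; omega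
  · intro i hi
    split_ifs with h
    · exact hj₁
    · exact mem_erase.2 ⟨h, hσ i (mem_of_mem_erase hi)⟩

end ClusterCost

theorem sum_mul_norm_sub_sq_eq {ι E : Type*} [NormedAddCommGroup E] [InnerProductSpace ℝ E]
    {s : Finset ι} {w : ι → ℝ} {p : ι → E} {c : E}
    (hc : ∑ i ∈ s, w i • p i = (∑ i ∈ s, w i) • c) (x : E) :
    ∑ i ∈ s, w i * ‖p i - x‖ ^ 2
      = ∑ i ∈ s, w i * ‖p i - c‖ ^ 2 + (∑ i ∈ s, w i) * ‖c - x‖ ^ 2 := by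
  have hcross : ∑ i ∈ s, w i * inner ℝ (p i - c) (c - x) = 0 := by
    simp_rw [← real_inner_smul_left, ← sum_inner, smul_sub, sum_sub_distrib, hc, ← sum_smul,
      sub_self, inner_zero_left]
  have hsplit (i : ι) :
      ‖p i - x‖ ^ 2 = ‖p i - c‖ ^ 2 + 2 * inner ℝ (p i - c) (c - x) + ‖c - x‖ ^ 2 := by
    rw [← sub_add_sub_cancel (p i) c x, norm_add_sq_real]
  simp_rw [hsplit, mul_add, sum_add_distrib, ← sum_mul, mul_left_comm _ (2 : ℝ), ← mul_sum,
    hcross, mul_zero, add_zero]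

section OneHot

variable {ι : Type*} [DecidableEq ι]

def oneHotCentroid (v : ι → ℝ) (S : Finset ι) : EuclideanSpace ℝ ι :=
  ∑ i ∈ S, (v i / ∑ j ∈ S, v j) • EuclideanSpace.single i (1 : ℝ)

theorem oneHotCentroid_apply (v : ι → ℝ) (S : Finset ι) (t : ι) :
    oneHotCentroid v S t = if t ∈ S then v t / ∑ j ∈ S, v j else 0 := by
  simp [oneHotCentroid, Pi.single_apply]

theorem sum_smul_single_eq_smul_oneHotCentroid {v : ι → ℝ} {S : Finset ι}
    (hS : ∑ i ∈ S, v i ≠ 0) :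
    ∑ i ∈ S, v i • EuclideanSpace.single i (1 : ℝ) = (∑ i ∈ S, v i) • oneHotCentroid v S := by
  simp_rw [oneHotCentroid, smul_sum, smul_smul, mul_div_cancel₀ _ hS]

variable [Fintype ι]

theorem norm_single_one_sub_sq (i : ι) (y : EuclideanSpace ℝ ι) :
    ‖EuclideanSpace.single i (1 : ℝ) - y‖ ^ 2 = 1 - 2 * y i + ‖y‖ ^ 2 := by
  simp [norm_sub_sq_real, EuclideanSpace.inner_single_left]

theorem norm_oneHotCentroid_sq (v : ι → ℝ) (S : Finset ι) :
    ‖oneHotCentroid v S‖ ^ 2 = (∑ i ∈ S, v i ^ 2) / (∑ i ∈ S, v i) ^ 2 := by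
  simp [EuclideanSpace.real_norm_sq_eq, oneHotCentroid_apply, ite_pow, sum_ite_mem, div_pow,
    sum_div]

theorem sum_mul_norm_single_sub_oneHotCentroid_sq {v : ι → ℝ} {S : Finset ι}
    (hS : ∑ i ∈ S, v i ≠ 0) :
    ∑ i ∈ S, v i * ‖EuclideanSpace.single i (1 : ℝ) - oneHotCentroid v S‖ ^ 2
      = clusterCost v S := by
  have h (i) (hi : i ∈ S) : v i * ‖EuclideanSpace.single i (1 : ℝ) - oneHotCentroid v S‖ ^ 2 =
      v i - 2 * v i ^ 2 / ∑ j ∈ S, v j + v i * ‖oneHotCentroid v S‖ ^ 2 := by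
    rw [norm_single_one_sub_sq, oneHotCentroid_apply, if_pos hi]; ring
  rw [sum_congr rfl h, sum_add_distrib, sum_sub_distrib, ← sum_mul, ← sum_div, ← mul_sum,
    norm_oneHotCentroid_sq, clusterCost]
  field_simp
  ring

theorem clusterCost_le_sum_mul_norm_sq {v : ι → ℝ} {S : Finset ι} (hv : ∀ i ∈ S, 0 ≤ v i)
    (x : EuclideanSpace ℝ ι) :
    clusterCost v S ≤ ∑ i ∈ S, v i * ‖EuclideanSpace.single i (1 : ℝ) - x‖ ^ 2 := by
  have hV : 0 ≤ ∑ i ∈ S, v i := sum_nonneg hv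
  rcases hV.eq_or_lt with hV | hV
  · simpa [clusterCost, ← hV] using sum_nonneg fun i hi => mul_nonneg (hv i hi) (sq_nonneg _)
  rw [sum_mul_norm_sub_sq_eq (sum_smul_single_eq_smul_oneHotCentroid hV.ne') x,
    sum_mul_norm_single_sub_oneHotCentroid_sq hV.ne']
  exact le_add_of_nonneg_right (by positivity)

theorem norm_single_one_sub_oneHotCentroid_sq_le {v : ι → ℝ} {S : Finset ι}
    (hv : ∀ i ∈ S, 0 ≤ v i) (i : ι) :
    ‖EuclideanSpace.single i (1 : ℝ) - oneHotCentroid v S‖ ^ 2 ≤ 2 := by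
  have hi : 0 ≤ oneHotCentroid v S i := by
    rw [oneHotCentroid_apply]
    split_ifs with h
    · exact div_nonneg (hv i h) (sum_nonneg hv)
    · exact le_rfl
  have hc : ‖oneHotCentroid v S‖ ^ 2 ≤ 1 := by
    rw [norm_oneHotCentroid_sq]
    exact div_le_one_of_le₀ (sum_sq_le_sq_sum_of_nonneg hv) (sq_nonneg _)
  rw [norm_single_one_sub_sq]
  linarith

end OneHot

theorem csInf_image_eq_of_forall_le {α β : Type*} [ConditionallyCompleteLattice β] {f : α → β}
    {s : Set α} {x : α} (hx : x ∈ s) (h : ∀ y ∈ s, f x ≤ f y) : sInf (f '' s) = f x :=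
  IsLeast.csInf_eq ⟨Set.mem_image_of_mem f hx, Set.forall_mem_image.2 h⟩

section Categorical

variable {L : ℕ} {v : Fin L → ℝ}

theorem catCost_eq_sum_of_nearest {C : Finset (EuclideanSpace ℝ (Fin L))}
    {c : Fin L → EuclideanSpace ℝ (Fin L)} (hcC : ∀ i, c i ∈ C)
    (hc : ∀ i, ∀ y ∈ C, ‖EuclideanSpace.single i (1 : ℝ) - c i‖
      ≤ ‖EuclideanSpace.single i (1 : ℝ) - y‖) :
    catCost L v C = ∑ i, v i * ‖EuclideanSpace.single i (1 : ℝ) - c i‖ ^ 2 :=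
  sum_congr rfl fun i _ => by rw [csInf_image_eq_of_forall_le (hcC i) (hc i)]

theorem clusterCost_le_catCost {k : ℕ} (hk : 1 ≤ k) (hkL : k ≤ L) (hpos : ∀ i, 0 < v i)
    (hmono : ∀ i j : Fin L, i ≤ j → v j ≤ v i) {C : Finset (EuclideanSpace ℝ (Fin L))}
    (hC : C.Nonempty) (hCk : #C ≤ k) :
    clusterCost v (univ.filter fun i : Fin L => k - 1 ≤ (i : ℕ)) ≤ catCost L v C := by
  choose c hcC hc using fun i : Fin L =>
    C.exists_min_image (fun x => ‖EuclideanSpace.single i (1 : ℝ) - x‖) hC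
  have hheavy : univ \ univ.filter (fun i : Fin L => k - 1 ≤ (i : ℕ))
      = univ.filter fun i : Fin L => (i : ℕ) < k - 1 := by
    ext i; simp; omega
  rw [catCost_eq_sum_of_nearest hcC hc, ← sum_fiberwise_of_maps_to fun i _ => hcC i]
  calc clusterCost v (univ.filter fun i : Fin L => k - 1 ≤ (i : ℕ))
      ≤ ∑ x ∈ C, clusterCost v (univ.filter (c · = x)) := by
        refine clusterCost_le_sum_clusterCost_fiber (filter_subset _ _) (fun i _ => hpos i)
          ?_ ?_ fun i _ => hcC i
        · rw [hheavy]
          intro i hi j hj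
          exact hmono i j (by simp only [mem_filter] at hi hj; omega)
        · rw [hheavy, Fin.card_filter_val_lt]; omega
    _ ≤ _ := sum_le_sum fun x _ => by
        rw [sum_congr rfl fun i hi => by rw [(mem_filter.1 hi).2]]
        exact clusterCost_le_sum_mul_norm_sq (fun i _ => (hpos i).le) x

theorem catCost_Cstar {k : ℕ} (hk : 1 ≤ k) (hkL : k ≤ L) (hpos : ∀ i, 0 < v i) :
    catCost L v (Cstar L k v) = clusterCost v (univ.filter fun i : Fin L => k - 1 ≤ (i : ℕ)) := by
  set T := univ.filter fun i : Fin L => k - 1 ≤ (i : ℕ)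
  have hμ : lightCentroid L k v = oneHotCentroid v T := rfl
  have hμmem : oneHotCentroid v T ∈ Cstar L k v := mem_union_right _ (mem_singleton_self _)
  have hsingle {i : Fin L} (hi : (i : ℕ) < k - 1) : EuclideanSpace.single i (1 : ℝ) ∈ Cstar L k v :=
    mem_union_left _ (mem_image_of_mem _ (by simpa using hi))
  have hlight (i) (hi : i ∈ T) (y) (hy : y ∈ Cstar L k v) :
      ‖EuclideanSpace.single i (1 : ℝ) - oneHotCentroid v T‖
        ≤ ‖EuclideanSpace.single i (1 : ℝ) - y‖ := by
    simp only [Cstar, mem_union, mem_image, mem_filter, mem_singleton, hμ] at hy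
    obtain ⟨j, ⟨-, hj⟩, rfl⟩ | rfl := hy
    · have hij : i ≠ j := by rintro rfl; simp [T] at hi; omega
      refine (sq_le_sq₀ (norm_nonneg _) (norm_nonneg _)).1 ?_
      refine (norm_single_one_sub_oneHotCentroid_sq_le (fun i _ => (hpos i).le) i).trans_eq ?_
      rw [norm_single_one_sub_sq]
      simp [hij]
      norm_num
    · exact le_rfl
  have hV : ∑ i ∈ T, v i ≠ 0 :=
    (sum_pos (fun i _ => hpos i) ⟨⟨L - 1, by omega⟩, by simp [T]; omega⟩).ne'
  rw [catCost_eq_sum_of_nearest (c := fun i =>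
      if i ∈ T then oneHotCentroid v T else EuclideanSpace.single i 1) ?_ ?_]
  · rw [← sum_subset (subset_univ T) fun i _ hi => by simp [hi]]
    rw [← sum_mul_norm_single_sub_oneHotCentroid_sq hV]
    exact sum_congr rfl fun i hi => by simp [hi]
  · intro i
    split_ifs with hi
    · exact hμmem
    · exact hsingle (by simp [T] at hi; omega)
  · intro i y hy
    split_ifs with hi
    · exact hlight i hi y hy
    · simp

theorem card_Cstar_le {k : ℕ} (hk : 1 ≤ k) : #(Cstar L k v) ≤ k := by
  have hcard := Fin.card_filter_val_lt (n := L) (m := k - 1)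
  refine (card_union_le _ _).trans ?_
  grw [card_singleton, card_image_le, hcard]
  omega

end Categorical

theorem statement16_general (L k : ℕ) (hk : 2 ≤ k) (hkL : k ≤ L)
    (v : Fin L → ℝ) (hpos : ∀ i, 0 < v i) (hmono : ∀ i j : Fin L, i ≤ j → v j ≤ v i) :
    catCost L v (Cstar L k v)
      = sInf {c : ℝ | ∃ C : Finset (EuclideanSpace ℝ (Fin L)),
          C.Nonempty ∧ C.card ≤ k ∧ catCost L v C = c} := by
  have hk₁ : 1 ≤ k := by omega
  refine (IsLeast.csInf_eq ⟨?_, ?_⟩).symm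
  · exact ⟨Cstar L k v, ⟨lightCentroid L k v, mem_union_right _ (mem_singleton_self _)⟩,
      card_Cstar_le hk₁, rfl⟩
  rintro _ ⟨C, hC, hCk, rfl⟩
  rw [catCost_Cstar hk₁ hkL hpos]
  exact clusterCost_le_catCost hk₁ hkL hpos hmono hC hCk

/-- for the categorical weighted k-means instance with
`v₁ ≥ ⋯ ≥ v_L > 0` and `2 ≤ k ≤ L`, the set `C* = {1₁, …, 1_{k−1}, μ}` is optimal:
its cost equals `OPT_k(I, v)`, the minimum cost over all nonempty centroid sets of size
at most `k`. -/
theorem statement16 (L k : ℕ) (hL : 2 ≤ L) (hk : 2 ≤ k) (hkL : k ≤ L)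
    (v : Fin L → ℝ) (hpos : ∀ i, 0 < v i) (hmono : ∀ i j : Fin L, i ≤ j → v j ≤ v i) :
    catCost L v (Cstar L k v)
      = sInf {c : ℝ | ∃ C : Finset (EuclideanSpace ℝ (Fin L)),
          C.Nonempty ∧ C.card ≤ k ∧ catCost L v C = c} :=
  statement16_general L k hk hkL v hpos hmono

end
end
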